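/- Let f : ℤ² → {contact elements} be a nondegenerate discrete channel surface with circular direction '+', and let p ∈ V satisfy ⟨p,p⟩ ≠ 0 and ⟨σ,p⟩ ≠ 0 for every nonzero σ ∈ s⁺(m,n) and all m, n ∈ ℤ. Then s⁺(m,n) is independent of m (write s⁺(n)), and for every n ∈ ℤ there exists a (2,1)-plane Eₙ contained in the orthogonal complement p^⊥ such that s⁺(n) ⊆ (Eₙ)^⊥ and, for every m ∈ ℤ, the subspace f(m,n) ∩ Eₙ is 1-dimensional and f(m,n) = s⁺(n) ⊕ (f(m,n) ∩ Eₙ). (The Dupin cyclide ((Eₙ)^⊥, Eₙ) touches f along the n-th '+'-coordinate line, and all spheres in its curvature sphere family in Eₙ are orthogonal to p, i.e., in the Möbius geometry determined by p this Dupin cyclide is a circle: a 'generating circle' of the discrete channel surface; discrete version of the existence of one family of circular curvature lines.) -/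

import Mathlib

noncomputable section

/-- The Lie sphere geometric model: `ℝ^{4,2}`. -/
abbrev V6 : Type := Fin 6 → ℝ

/-- The symmetric bilinear form of signature `(4,2)` on `V6`. -/
def B (x y : V6) : ℝ :=
  x 0 * y 0 + x 1 * y 1 + x 2 * y 2 + x 3 * y 3 - x 4 * y 4 - x 5 * y 5

/-- An oriented sphere: a 1-dimensional isotropic subspace. -/
def IsSphere (S : Submodule ℝ V6) : Prop :=
  Module.finrank ℝ S = 1 ∧ ∀ x ∈ S, B x x = 0

/-- A contact element: a 2-dimensional totally isotropic subspace. -/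
def IsContact (W : Submodule ℝ V6) : Prop :=
  Module.finrank ℝ W = 2 ∧ ∀ x ∈ W, ∀ y ∈ W, B x y = 0

/-- A `(2,1)`-plane: 3-dim subspace on which the form is nondegenerate of signature `(2,1)`. -/
def IsSig21 (D : Submodule ℝ V6) : Prop :=
  ∃ u v w : V6, D = Submodule.span ℝ {u, v, w} ∧
    B u u = 1 ∧ B v v = 1 ∧ B w w = -1 ∧ B u v = 0 ∧ B u w = 0 ∧ B v w = 0

/-- A Dupin cyclide: a pair of `(2,1)`-planes, the second the orthogonal complement of the first. -/
def IsDupin (D E : Submodule ℝ V6) : Prop :=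
  IsSig21 D ∧ IsSig21 E ∧ ∀ x : V6, x ∈ E ↔ ∀ y ∈ D, B x y = 0

/-- Horizontal curvature sphere on the edge from `(m,n)` to `(m+1,n)`. -/
def sPlus (f : ℤ × ℤ → Submodule ℝ V6) (m n : ℤ) : Submodule ℝ V6 :=
  f (m, n) ⊓ f (m + 1, n)

/-- Vertical curvature sphere on the edge from `(m,n)` to `(m,n+1)`. -/
def sMinus (f : ℤ × ℤ → Submodule ℝ V6) (m n : ℤ) : Submodule ℝ V6 :=
  f (m, n) ⊓ f (m, n + 1)

/-- A discrete Legendre map. -/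
def IsLegendre (f : ℤ × ℤ → Submodule ℝ V6) : Prop :=
  (∀ p : ℤ × ℤ, IsContact (f p)) ∧
  (∀ m n : ℤ, Module.finrank ℝ (sPlus f m n) = 1) ∧
  (∀ m n : ℤ, Module.finrank ℝ (sMinus f m n) = 1)

/-- A face-cyclide congruence for `f`. -/
def IsFaceCyclideCongruence (f D E : ℤ × ℤ → Submodule ℝ V6) : Prop :=
  ∀ m n : ℤ,
    IsDupin (D (m, n)) (E (m, n)) ∧
    sPlus f m n ≤ D (m, n) ∧ sPlus f m (n + 1) ≤ D (m, n) ∧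
    sMinus f m n ≤ E (m, n) ∧ sMinus f (m + 1) n ≤ E (m, n)

/-- A discrete channel surface with circular direction `+`. -/
def IsChannelPlus (f : ℤ × ℤ → Submodule ℝ V6) : Prop :=
  IsLegendre f ∧
  ∃ D E : ℤ × ℤ → Submodule ℝ V6,
    IsFaceCyclideCongruence f D E ∧
    ∀ m m' n : ℤ, D (m, n) = D (m', n) ∧ E (m, n) = E (m', n)

/-- The orthogonal complement of a point sphere complex `p`. -/
def pPerp (p : V6) : Submodule ℝ V6 where
  carrier := {x | B x p = 0}
  add_mem' := by
    intro a b ha hb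
    simp only [Set.mem_setOf_eq, B, Pi.add_apply] at *
    linear_combination ha + hb
  zero_mem' := by simp [B]
  smul_mem' := by
    intro c x hx
    simp only [Set.mem_setOf_eq, B, Pi.smul_apply, smul_eq_mul] at *
    linear_combination c * hx

/-- `f` is nondegenerate: every contact element of `f` is spanned by a horizontal and a
vertical curvature sphere. -/
def Nondeg (f : ℤ × ℤ → Submodule ℝ V6) : Prop :=
  ∀ m n : ℤ, sPlus f m n ≠ sMinus f m n ∧ sPlus f m (n + 1) ≠ sMinus f m n

section Helpers

lemma B_symm (x y : V6) : B x y = B y x := by simp only [B]; ring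

lemma B_expand9 (a b c a' b' c' : ℝ) (u v w u1 v1 w1 : V6) :
    B (a•u+b•v+c•w) (a'•u1+b'•v1+c'•w1) =
      a*a'*B u u1 + a*b'*B u v1 + a*c'*B u w1 + b*a'*B v u1 + b*b'*B v v1 + b*c'*B v w1
        + c*a'*B w u1 + c*b'*B w v1 + c*c'*B w w1 := by
  simp only [B, Pi.add_apply, Pi.smul_apply, smul_eq_mul]; ring

lemma B_left3 (a b c : ℝ) (u v w y : V6) :
    B (a•u+b•v+c•w) y = a*B u y + b*B v y + c*B w y := by
  simp only [B, Pi.add_apply, Pi.smul_apply, smul_eq_mul]; ring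

lemma B_right3 (a b c : ℝ) (x u v w : V6) :
    B x (a•u+b•v+c•w) = a*B x u + b*B x v + c*B x w := by
  simp only [B, Pi.add_apply, Pi.smul_apply, smul_eq_mul]; ring

lemma B_sub_smul_both (x y σ : V6) (α β : ℝ) :
    B (x - α•σ) (y - β•σ) = B x y - β * B x σ - α * B σ y + α*β*B σ σ := by
  simp only [B, Pi.sub_apply, Pi.smul_apply, smul_eq_mul]; ring

lemma B_sub_smul_left (x σ y : V6) (α : ℝ) :
    B (x - α•σ) y = B x y - α * B σ y := by
  simp only [B, Pi.sub_apply, Pi.smul_apply, smul_eq_mul]; ring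

lemma B_right_sub_smul (x y σ : V6) (α : ℝ) :
    B x (y - α•σ) = B x y - α * B x σ := by
  simp only [B, Pi.sub_apply, Pi.smul_apply, smul_eq_mul]; ring

lemma B_smul_left (a : ℝ) (x y : V6) : B (a•x) y = a * B x y := by
  simp only [B, Pi.smul_apply, smul_eq_mul]; ring

lemma B_comb2_left (α β : ℝ) (σ τ y : V6) : B (α•σ+β•τ) y = α*B σ y + β*B τ y := by
  simp only [B, Pi.add_apply, Pi.smul_apply, smul_eq_mul]; ring

lemma mem_span_triple' {u v w x : V6} :
    x ∈ Submodule.span ℝ {u, v, w} ↔ ∃ a b c : ℝ, a • u + b • v + c • w = x := by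
  constructor
  · intro hx
    rw [show ({u,v,w} : Set V6) = insert u {v,w} from rfl, Submodule.mem_span_insert] at hx
    obtain ⟨a, z, hz, rfl⟩ := hx
    obtain ⟨b, c, rfl⟩ := Submodule.mem_span_pair.mp hz
    exact ⟨a, b, c, by module⟩
  · rintro ⟨a,b,c,rfl⟩
    refine Submodule.add_mem _ (Submodule.add_mem _ ?_ ?_) ?_ <;>
      exact Submodule.smul_mem _ _ (Submodule.subset_span (by simp))

lemma exists_gen {S : Submodule ℝ V6} (h : Module.finrank ℝ S = 1) :
    ∃ x : V6, x ≠ 0 ∧ S = Submodule.span ℝ {x} := by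
  have hne : S ≠ ⊥ := by
    intro hb
    rw [hb, finrank_bot] at h
    exact one_ne_zero h.symm
  obtain ⟨x, hxS, hx0⟩ := Submodule.ne_bot_iff S |>.mp hne
  refine ⟨x, hx0, ?_⟩
  refine (Submodule.eq_of_le_of_finrank_le ?_ ?_).symm
  · rwa [Submodule.span_singleton_le_iff_mem]
  · rw [h, finrank_span_singleton hx0]

lemma sig21_dependent {u v w x y : V6}
    (huu : B u u = 1) (hvv : B v v = 1) (hww : B w w = -1)
    (huv : B u v = 0) (huw : B u w = 0) (hvw : B v w = 0)
    (hx : x ∈ Submodule.span ℝ {u,v,w}) (hy : y ∈ Submodule.span ℝ {u,v,w})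
    (hxx : B x x = 0) (hyy : B y y = 0) (hxy : B x y = 0) (hx0 : x ≠ 0) :
    ∃ t : ℝ, y = t • x := by
  have hvu : B v u = 0 := by rw [B_symm]; exact huv
  have hwu : B w u = 0 := by rw [B_symm]; exact huw
  have hwv : B w v = 0 := by rw [B_symm]; exact hvw
  obtain ⟨a, b, c, rfl⟩ := mem_span_triple'.mp hx
  obtain ⟨a', b', c', rfl⟩ := mem_span_triple'.mp hy
  rw [B_expand9, huu, hvv, hww, huv, huw, hvw, hvu, hwu, hwv] at hxx hyy hxy
  have h1 : a^2 + b^2 - c^2 = 0 := by linear_combination hxx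
  have h2 : a'^2 + b'^2 - c'^2 = 0 := by linear_combination hyy
  have h3 : a*a' + b*b' - c*c' = 0 := by linear_combination hxy
  have hc : c ≠ 0 := by
    intro hc
    subst hc
    have ea : a^2 = 0 := le_antisymm (by nlinarith [sq_nonneg b]) (sq_nonneg a)
    have eb : b^2 = 0 := le_antisymm (by nlinarith [sq_nonneg a]) (sq_nonneg b)
    apply hx0
    rw [sq_eq_zero_iff.mp ea, sq_eq_zero_iff.mp eb]
    simp
  have hkey : (c*a' - c'*a)^2 + (c*b' - c'*b)^2 = 0 := by
    linear_combination c^2*h2 + c'^2*h1 - 2*c*c'*h3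
  have eA : (c*a' - c'*a)^2 = 0 :=
    le_antisymm (by nlinarith [sq_nonneg (c*b' - c'*b)]) (sq_nonneg _)
  have eB : (c*b' - c'*b)^2 = 0 :=
    le_antisymm (by nlinarith [sq_nonneg (c*a' - c'*a)]) (sq_nonneg _)
  have hA : c*a' = c'*a := sub_eq_zero.mp (sq_eq_zero_iff.mp eA)
  have hB : c*b' = c'*b := sub_eq_zero.mp (sq_eq_zero_iff.mp eB)
  refine ⟨c⁻¹ * c', ?_⟩
  have hz : c • (a'•u+b'•v+c'•w) = c' • (a•u+b•v+c•w) := by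
    rw [smul_add, smul_add, smul_add, smul_add, smul_smul, smul_smul, smul_smul, smul_smul,
      smul_smul, smul_smul, hA, hB, mul_comm c c']
  rw [mul_smul, ← hz, inv_smul_smul₀ hc]

lemma one_dim_disjoint {S T : Submodule ℝ V6}
    (hS : Module.finrank ℝ S = 1) (hT : Module.finrank ℝ T = 1) (hne : S ≠ T) :
    Disjoint S T := by
  rw [disjoint_iff]
  by_contra hb
  obtain ⟨x, hx, hx0⟩ := Submodule.ne_bot_iff _ |>.mp hb
  have h1 : Submodule.span ℝ {x} = S := by
    refine Submodule.eq_of_le_of_finrank_le ?_ ?_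
    · rw [Submodule.span_singleton_le_iff_mem]; exact hx.1
    · rw [hS, finrank_span_singleton hx0]
  have h2 : Submodule.span ℝ {x} = T := by
    refine Submodule.eq_of_le_of_finrank_le ?_ ?_
    · rw [Submodule.span_singleton_le_iff_mem]; exact hx.2
    · rw [hT, finrank_span_singleton hx0]
  exact hne (h1 ▸ h2)

lemma sPlus_le_left (f : ℤ × ℤ → Submodule ℝ V6) (m n : ℤ) : sPlus f m n ≤ f (m, n) :=
  inf_le_left

lemma sPlus_le_right (f : ℤ × ℤ → Submodule ℝ V6) (m n : ℤ) : sPlus f m n ≤ f (m + 1, n) :=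
  inf_le_right

lemma sMinus_le_left (f : ℤ × ℤ → Submodule ℝ V6) (m n : ℤ) : sMinus f m n ≤ f (m, n) :=
  inf_le_left

lemma int_const {α : Type*} (g : ℤ → α) (h : ∀ m, g m = g (m+1)) : ∀ m m' : ℤ, g m = g m' := by
  have h0 : ∀ m : ℤ, g m = g 0 := by
    intro m
    induction m using Int.induction_on with
    | zero => rfl
    | succ k ih => rw [← h k]; exact ih
    | pred k ih =>
        have := h (-(k:ℤ) - 1)
        rw [show (-(k:ℤ)-1)+1 = -k by ring] at this
        rw [this]; exact ih
  intro m m'; rw [h0 m, h0 m']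

lemma sPlus_const {f D E : ℤ × ℤ → Submodule ℝ V6} (hleg : IsLegendre f)
    (hcong : IsFaceCyclideCongruence f D E)
    (hDc : ∀ m m' n : ℤ, D (m, n) = D (m', n)) :
    ∀ m m' n : ℤ, sPlus f m n = sPlus f m' n := by
  intro m m' n
  refine int_const (fun m => sPlus f m n) (fun m => ?_) m m'
  show sPlus f m n = sPlus f (m + 1) n
  obtain ⟨x, hx0, hxsp⟩ := exists_gen (hleg.2.1 m n)
  obtain ⟨y, hy0, hysp⟩ := exists_gen (hleg.2.1 (m+1) n)
  have hxS : x ∈ sPlus f m n := hxsp ▸ Submodule.mem_span_singleton_self x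
  have hyS : y ∈ sPlus f (m+1) n := hysp ▸ Submodule.mem_span_singleton_self y
  have hxW : x ∈ f (m+1, n) := sPlus_le_right f m n hxS
  have hyW : y ∈ f (m+1, n) := sPlus_le_left f (m+1) n hyS
  have hC := hleg.1 (m+1, n)
  obtain ⟨u, v, w, hDspan, huu, hvv, hww, huv, huw, hvw⟩ := (hcong m n).1.1
  have hxD : x ∈ Submodule.span ℝ {u, v, w} := hDspan ▸ (hcong m n).2.1 hxS
  have hyD : y ∈ Submodule.span ℝ {u, v, w} := by
    have h1 : y ∈ D (m+1, n) := (hcong (m+1) n).2.1 hyS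
    rw [hDc (m+1) m n, hDspan] at h1
    exact h1
  obtain ⟨t, hty⟩ := sig21_dependent huu hvv hww huv huw hvw hxD hyD
    (hC.2 x hxW x hxW) (hC.2 y hyW y hyW) (hC.2 x hxW y hyW) hx0
  refine (Submodule.eq_of_le_of_finrank_le ?_ ?_).symm
  · rw [hysp, Submodule.span_singleton_le_iff_mem, hxsp]
    exact Submodule.mem_span_singleton.mpr ⟨t, hty.symm⟩
  · rw [hleg.2.1 m n, hleg.2.1 (m+1) n]

end Helpers

/-- A nondegenerate discrete channel surface with circular direction `+` has
constant horizontal curvature spheres `s⁺(n)` along the `+`-coordinate lines, and for every `n`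
there is a `(2,1)`-plane `Eₙ ⊆ p^⊥` with `s⁺(n) ⊆ Eₙ^⊥` such that each contact element
`f(m,n)` splits as the direct sum of `s⁺(n)` and the line `f(m,n) ∩ Eₙ`: the Dupin cyclide
`(Eₙ^⊥, Eₙ)` touches `f` along the `n`-th `+`-coordinate line and is a circle in the Möbius
geometry determined by `p` — a generating circle of the discrete channel surface. -/
theorem generating_circles_exist
    (f : ℤ × ℤ → Submodule ℝ V6) (hf : IsChannelPlus f) (hnd : Nondeg f)
    (p : V6) (hp : B p p ≠ 0)
    (hps : ∀ m n : ℤ, ∀ σ ∈ sPlus f m n, σ ≠ 0 → B σ p ≠ 0) :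
    (∀ m m' n : ℤ, sPlus f m n = sPlus f m' n) ∧
    ∀ n : ℤ, ∃ E : Submodule ℝ V6, IsSig21 E ∧
      (∀ x ∈ E, B x p = 0) ∧
      (∀ x ∈ sPlus f 0 n, ∀ y ∈ E, B x y = 0) ∧
      ∀ m : ℤ, Module.finrank ℝ ↥(f (m, n) ⊓ E) = 1 ∧
        Disjoint (sPlus f 0 n) (f (m, n) ⊓ E) ∧
        sPlus f 0 n ⊔ (f (m, n) ⊓ E) = f (m, n) := by
  obtain ⟨hleg, D, E0, hcong, hconst⟩ := hf
  have hDc : ∀ m m' n : ℤ, D (m, n) = D (m', n) := fun m m' n => (hconst m m' n).1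
  have hEc : ∀ m m' n : ℤ, E0 (m, n) = E0 (m', n) := fun m m' n => (hconst m m' n).2
  have hsp : ∀ m m' n : ℤ, sPlus f m n = sPlus f m' n := sPlus_const hleg hcong hDc
  refine ⟨hsp, fun n => ?_⟩
  -- the generator of the constant horizontal curvature sphere
  obtain ⟨σ, hσ0, hσspan⟩ := exists_gen (hleg.2.1 0 n)
  have hσmem : σ ∈ sPlus f 0 n := hσspan ▸ Submodule.mem_span_singleton_self σ
  have hσf : ∀ m : ℤ, σ ∈ f (m, n) := by
    intro m
    have h1 : σ ∈ sPlus f m n := by rw [hsp m 0 n]; exact hσmem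
    exact sPlus_le_left f m n h1
  have hσσ : B σ σ = 0 := (hleg.1 (0, n)).2 σ (hσf 0) σ (hσf 0)
  have hσp : B σ p ≠ 0 := hps 0 n σ hσmem hσ0
  -- the Dupin cyclide of the row of faces below
  obtain ⟨hD21, hE21, hperp⟩ := (hcong 0 n).1
  obtain ⟨u, v, w, hEspan, huu, hvv, hww, huv, huw, hvw⟩ := hE21
  have hσD : σ ∈ D (0, n) := (hcong 0 n).2.1 hσmem
  have hmemE0 : ∀ z ∈ Submodule.span ℝ {u, v, w}, z ∈ E0 (0, n) := fun z hz => hEspan ▸ hz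
  have hBuσ : B u σ = 0 :=
    (hperp u).mp (hmemE0 u (Submodule.subset_span (by simp))) σ hσD
  have hBvσ : B v σ = 0 :=
    (hperp v).mp (hmemE0 v (Submodule.subset_span (by simp))) σ hσD
  have hBwσ : B w σ = 0 :=
    (hperp w).mp (hmemE0 w (Submodule.subset_span (by simp))) σ hσD
  have hBσu : B σ u = 0 := by rw [B_symm]; exact hBuσ
  have hBσv : B σ v = 0 := by rw [B_symm]; exact hBvσ
  have hBσw : B σ w = 0 := by rw [B_symm]; exact hBwσ
  -- project the orthonormal basis of E0 off σ, along p
  set u' : V6 := u - (B u p / B σ p) • σ with hu'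
  set v' : V6 := v - (B v p / B σ p) • σ with hv'
  set w' : V6 := w - (B w p / B σ p) • σ with hw'
  have hσu' : B σ u' = 0 := by rw [hu', B_right_sub_smul, hBσu, hσσ]; ring
  have hσv' : B σ v' = 0 := by rw [hv', B_right_sub_smul, hBσv, hσσ]; ring
  have hσw' : B σ w' = 0 := by rw [hw', B_right_sub_smul, hBσw, hσσ]; ring
  have hu'p : B u' p = 0 := by rw [hu', B_sub_smul_left]; field_simp; ring
  have hv'p : B v' p = 0 := by rw [hv', B_sub_smul_left]; field_simp; ring
  have hw'p : B w' p = 0 := by rw [hw', B_sub_smul_left]; field_simp; ring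
  refine ⟨Submodule.span ℝ {u', v', w'}, ⟨u', v', w', rfl, ?_, ?_, ?_, ?_, ?_, ?_⟩, ?_, ?_, ?_⟩
  · rw [hu', B_sub_smul_both, hBuσ, hBσu, hσσ, huu]; ring
  · rw [hv', B_sub_smul_both, hBvσ, hBσv, hσσ, hvv]; ring
  · rw [hw', B_sub_smul_both, hBwσ, hBσw, hσσ, hww]; ring
  · rw [hu', hv', B_sub_smul_both, hBuσ, hBσv, hσσ, huv]; ring
  · rw [hu', hw', B_sub_smul_both, hBuσ, hBσw, hσσ, huw]; ring
  · rw [hv', hw', B_sub_smul_both, hBvσ, hBσw, hσσ, hvw]; ring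
  -- E ⊆ p^⊥
  · intro x hx
    obtain ⟨a, b, c, rfl⟩ := mem_span_triple'.mp hx
    rw [B_left3, hu'p, hv'p, hw'p]; ring
  -- s⁺(n) ⊥ E
  · intro x hx y hy
    obtain ⟨α, rfl⟩ := Submodule.mem_span_singleton.mp (hσspan ▸ hx)
    obtain ⟨a, b, c, rfl⟩ := mem_span_triple'.mp hy
    rw [B_smul_left, B_right3, hσu', hσv', hσw']; ring
  -- the per-vertex statements
  intro m
  have hEperp : ∀ x ∈ Submodule.span ℝ {u', v', w'}, B x p = 0 := by
    intro x hx
    obtain ⟨a, b, c, rfl⟩ := mem_span_triple'.mp hx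
    rw [B_left3, hu'p, hv'p, hw'p]; ring
  obtain ⟨τ, hτ0, hτspan⟩ := exists_gen (hleg.2.2 m n)
  have hτmem : τ ∈ sMinus f m n := hτspan ▸ Submodule.mem_span_singleton_self τ
  have hτf : τ ∈ f (m, n) := sMinus_le_left f m n hτmem
  have hτE0 : τ ∈ Submodule.span ℝ {u, v, w} := by
    have h1 : τ ∈ E0 (m, n) := (hcong m n).2.2.2.1 hτmem
    rw [hEc m 0 n, hEspan] at h1
    exact h1
  obtain ⟨a, b, c, hτeq⟩ := mem_span_triple'.mp hτE0
  have hτBp : B τ p = a * B u p + b * B v p + c * B w p := by rw [← hτeq, B_left3]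
  have hne : sPlus f 0 n ≠ sMinus f m n := by rw [hsp 0 m n]; exact (hnd m n).1
  have hτns : τ ∉ sPlus f 0 n := by
    intro hmem
    apply hne
    refine (Submodule.eq_of_le_of_finrank_le ?_ ?_).symm
    · rw [hτspan, Submodule.span_singleton_le_iff_mem]; exact hmem
    · rw [hleg.2.1 0 n, hleg.2.2 m n]
  -- the point sphere at the vertex (m,n)
  set t : V6 := B σ p • τ - B τ p • σ with ht
  have htf : t ∈ f (m, n) :=
    Submodule.sub_mem _ (Submodule.smul_mem _ _ hτf) (Submodule.smul_mem _ _ (hσf m))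
  have htE : t ∈ Submodule.span ℝ {u', v', w'} := by
    refine mem_span_triple'.mpr ⟨B σ p * a, B σ p * b, B σ p * c, ?_⟩
    rw [hu', hv', hw', ht, hτBp, ← hτeq]
    match_scalars <;> field_simp <;> ring
  have ht0 : t ≠ 0 := by
    intro ht0
    apply hτns
    have h1 : B σ p • τ = B τ p • σ := by
      have := sub_eq_zero.mp (ht ▸ ht0 : B σ p • τ - B τ p • σ = 0)
      exact this
    have h2 : τ = ((B σ p)⁻¹ * B τ p) • σ := by
      rw [mul_smul, ← h1, inv_smul_smul₀ hσp]
    rw [hσspan]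
    exact Submodule.mem_span_singleton.mpr ⟨(B σ p)⁻¹ * B τ p, h2.symm⟩
  -- identify f(m,n) with s⁺(n) ⊔ s⁻(m,n)
  have hdisj0 : Disjoint (sPlus f 0 n) (sMinus f m n) :=
    one_dim_disjoint (hleg.2.1 0 n) (hleg.2.2 m n) hne
  have hfr0 : Module.finrank ℝ ↥(sPlus f 0 n ⊔ sMinus f m n) = 2 := by
    have h1 := Submodule.finrank_sup_add_finrank_inf_eq (sPlus f 0 n) (sMinus f m n)
    rw [disjoint_iff.mp hdisj0, finrank_bot, hleg.2.1 0 n, hleg.2.2 m n] at h1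
    omega
  have hfsup : sPlus f 0 n ⊔ sMinus f m n = f (m, n) := by
    refine Submodule.eq_of_le_of_finrank_le
      (sup_le (by rw [hsp 0 m n]; exact sPlus_le_left f m n) (sMinus_le_left f m n)) ?_
    rw [(hleg.1 (m, n)).1, hfr0]
  -- f(m,n) ⊓ E = span {t}
  have hLt : f (m, n) ⊓ Submodule.span ℝ {u', v', w'} = Submodule.span ℝ {t} := by
    apply le_antisymm
    · intro x hx
      have hxf : x ∈ f (m, n) := hx.1
      have hxE : x ∈ Submodule.span ℝ {u', v', w'} := hx.2
      rw [← hfsup] at hxf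
      obtain ⟨y, hy, z, hz, rfl⟩ := Submodule.mem_sup.mp hxf
      obtain ⟨α, rfl⟩ := Submodule.mem_span_singleton.mp (hσspan ▸ hy)
      obtain ⟨β, rfl⟩ := Submodule.mem_span_singleton.mp (hτspan ▸ hz)
      have hxp : B (α•σ + β•τ) p = 0 := hEperp _ hxE
      rw [B_comb2_left] at hxp
      refine Submodule.mem_span_singleton.mpr ⟨β / B σ p, ?_⟩
      rw [ht]
      match_scalars
      all_goals (field_simp; try linarith [hxp]; try ring)
    · rw [Submodule.span_singleton_le_iff_mem]
      exact Submodule.mem_inf.mpr ⟨htf, htE⟩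
  have hdisj : Disjoint (sPlus f 0 n) (f (m, n) ⊓ Submodule.span ℝ {u', v', w'}) := by
    rw [Submodule.disjoint_def]
    intro x hx hx2
    obtain ⟨α, rfl⟩ := Submodule.mem_span_singleton.mp (hσspan ▸ hx)
    have hxp : B (α•σ) p = 0 := hEperp _ hx2.2
    rw [B_smul_left] at hxp
    have : α = 0 := by
      rcases mul_eq_zero.mp hxp with h | h
      · exact h
      · exact absurd h hσp
    rw [this, zero_smul]
  refine ⟨?_, hdisj, ?_⟩
  · rw [hLt, finrank_span_singleton ht0]
  · have hdisj' : Disjoint (sPlus f 0 n) (Submodule.span ℝ {t}) := hLt ▸ hdisj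
    have hfr1 : Module.finrank ℝ ↥(sPlus f 0 n ⊔ Submodule.span ℝ {t}) = 2 := by
      have h1 := Submodule.finrank_sup_add_finrank_inf_eq (sPlus f 0 n) (Submodule.span ℝ {t})
      rw [disjoint_iff.mp hdisj', finrank_bot, hleg.2.1 0 n, finrank_span_singleton ht0] at h1
      omega
    rw [hLt]
    refine Submodule.eq_of_le_of_finrank_le
      (sup_le (by rw [hsp 0 m n]; exact sPlus_le_left f m n)
        ((Submodule.span_singleton_le_iff_mem t _).mpr htf)) ?_
    rw [(hleg.1 (m, n)).1, hfr1]
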